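/- Let f : ℝⁿ → ℝ be twice continuously differentiable with L₂-Lipschitz Hessian, let x ∈ ℝⁿ, g = ∇f(x), H = ∇²f(x), T(s) = f(x) + gᵀs + (1/2)sᵀHs, and for σ > 0 let m(s) = T(s) + (σ/3)‖s‖³. Let η₁ ∈ (0,1) and let s ∈ ℝⁿ satisfy m(s) < m(0). If σ ≥ L₂/(2(1 − η₁)), then f(x) − f(x+s) ≥ η₁ (T(0) − T(s)), i.e. the iteration is successful. -/

import Mathlib

open RealInnerProductSpace Set

/-!
Taylor's theorem with a Lipschitz Hessian gives `f(x + s) ≤ T(s) + (L₂/6)‖s‖³`, while `m(s) < m(0)`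
says that the model decrease `T(0) - T(s)` exceeds `(σ/3)‖s‖³`. Since `(1 - η₁)σ/3 ≥ L₂/6`, the
fraction `1 - η₁` of the model decrease already pays for the Taylor error, and the remaining
fraction `η₁` is realised by `f`.
-/

lemma norm_le_div_of_norm_deriv_le_mul_pow {F : Type*} [NormedAddCommGroup F] [NormedSpace ℝ F]
    {G G' : ℝ → F} {C : ℝ} (k : ℕ) (h0 : G 0 = 0) (hG : ∀ t, HasDerivAt G (G' t) t)
    (hbound : ∀ t ∈ Ico (0 : ℝ) 1, ‖G' t‖ ≤ C * t ^ k) :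
    ‖G 1‖ ≤ C / (k + 1) := by
  have hB : ∀ t : ℝ, HasDerivAt (fun t => C / (k + 1) * t ^ (k + 1)) (C * t ^ k) t := by
    intro t
    refine ((hasDerivAt_pow (k + 1) t).const_mul (C / (k + 1))).congr_deriv ?_
    simp only [add_tsub_cancel_right, Nat.cast_add, Nat.cast_one]
    field_simp
  simpa using image_norm_le_of_norm_deriv_right_le_deriv_boundary
    (fun t _ => (hG t).continuousAt.continuousWithinAt) (fun t _ => (hG t).hasDerivWithinAt)
    (by simp [h0]) hB hbound (right_mem_Icc.mpr zero_le_one)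

section LipschitzDerivative

variable {E F : Type*} [NormedAddCommGroup E] [NormedSpace ℝ E]
  [NormedAddCommGroup F] [NormedSpace ℝ F]

lemma norm_sub_sub_fderiv_le_of_lipschitz_fderiv {G : E → F} {L : ℝ} (hG : Differentiable ℝ G)
    (hLip : ∀ y z, ‖fderiv ℝ G y - fderiv ℝ G z‖ ≤ L * ‖y - z‖) (x u : E) :
    ‖G (x + u) - G x - fderiv ℝ G x u‖ ≤ L / 2 * ‖u‖ ^ 2 := by
  have hline : ∀ t : ℝ, HasDerivAt (fun t : ℝ => x + t • u) u t := fun t => by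
    simpa using ((hasDerivAt_id t).smul_const u).const_add x
  have hderiv : ∀ t : ℝ, HasDerivAt (fun t : ℝ => G (x + t • u) - G x - t • fderiv ℝ G x u)
      (fderiv ℝ G (x + t • u) u - fderiv ℝ G x u) t := fun t => by
    have hcomp := (hG (x + t • u)).hasFDerivAt.comp_hasDerivAt t (hline t)
    exact ((hcomp.sub_const (G x)).sub ((hasDerivAt_id t).smul_const (fderiv ℝ G x u))).congr_deriv
      (by rw [one_smul])
  have hbound : ∀ t ∈ Ico (0 : ℝ) 1,
      ‖fderiv ℝ G (x + t • u) u - fderiv ℝ G x u‖ ≤ L * ‖u‖ ^ 2 * t ^ 1 := by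
    rintro t ⟨ht, -⟩
    calc ‖fderiv ℝ G (x + t • u) u - fderiv ℝ G x u‖
        ≤ ‖fderiv ℝ G (x + t • u) - fderiv ℝ G x‖ * ‖u‖ :=
          (fderiv ℝ G (x + t • u) - fderiv ℝ G x).le_opNorm u
      _ ≤ L * ‖t • u‖ * ‖u‖ := by
          gcongr
          simpa using hLip (x + t • u) x
      _ = L * ‖u‖ ^ 2 * t ^ 1 := by
          rw [norm_smul, Real.norm_of_nonneg ht]
          ring
  have := norm_le_div_of_norm_deriv_le_mul_pow 1 (by simp) hderiv hbound
  norm_num at this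
  linarith

end LipschitzDerivative

section Gradient

variable {E : Type*} [NormedAddCommGroup E] [InnerProductSpace ℝ E] [CompleteSpace E]

lemma ContDiff.gradient {f : E → ℝ} {n : WithTop ℕ∞} (hf : ContDiff ℝ (n + 1) f) :
    ContDiff ℝ n (gradient f) :=
  (InnerProductSpace.toDual ℝ E).symm.contDiff.comp (hf.fderiv_right le_rfl)

lemma abs_sub_taylor_le_of_lipschitz_hessian {f : E → ℝ} {L : ℝ} (hf : Differentiable ℝ f)
    (hgrad : Differentiable ℝ (gradient f))
    (hLip : ∀ y z, ‖fderiv ℝ (gradient f) y - fderiv ℝ (gradient f) z‖ ≤ L * ‖y - z‖) (x s : E) :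
    |f (x + s) - f x - ⟪gradient f x, s⟫ - (1 / 2) * ⟪s, fderiv ℝ (gradient f) x s⟫| ≤
      L / 6 * ‖s‖ ^ 3 := by
  set H := fderiv ℝ (gradient f) x
  have hline : ∀ t : ℝ, HasDerivAt (fun t : ℝ => x + t • s) s t := fun t => by
    simpa using ((hasDerivAt_id t).smul_const s).const_add x
  have hderiv : ∀ t : ℝ, HasDerivAt
      (fun t : ℝ => f (x + t • s) - f x - t * ⟪gradient f x, s⟫ - t ^ 2 / 2 * ⟪s, H s⟫)
      ⟪gradient f (x + t • s) - gradient f x - H (t • s), s⟫ t := fun t => by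
    have hcomp := (hf (x + t • s)).hasFDerivAt.comp_hasDerivAt t (hline t)
    have hquad : HasDerivAt (fun t : ℝ => t ^ 2 / 2 * ⟪s, H s⟫) (t * ⟪s, H s⟫) t := by
      refine (((hasDerivAt_pow 2 t).div_const 2).mul_const ⟪s, H s⟫).congr_deriv ?_
      ring
    refine (((hcomp.sub_const (f x)).sub ((hasDerivAt_id t).mul_const _)).sub hquad).congr_deriv ?_
    rw [inner_sub_left, inner_sub_left, map_smul, real_inner_smul_left, real_inner_comm s (H s),
      inner_gradient_left, inner_gradient_left, one_mul]
  have hbound : ∀ t ∈ Ico (0 : ℝ) 1,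
      ‖⟪gradient f (x + t • s) - gradient f x - H (t • s), s⟫‖ ≤ L / 2 * ‖s‖ ^ 3 * t ^ 2 := by
    rintro t ⟨ht, -⟩
    calc ‖⟪gradient f (x + t • s) - gradient f x - H (t • s), s⟫‖
        ≤ ‖gradient f (x + t • s) - gradient f x - H (t • s)‖ * ‖s‖ := norm_inner_le_norm _ _
      _ ≤ L / 2 * ‖t • s‖ ^ 2 * ‖s‖ := by
          gcongr
          exact norm_sub_sub_fderiv_le_of_lipschitz_fderiv hgrad hLip x (t • s)
      _ = L / 2 * ‖s‖ ^ 3 * t ^ 2 := by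
          rw [norm_smul, Real.norm_of_nonneg ht]
          ring
  have := norm_le_div_of_norm_deriv_le_mul_pow 2 (by simp) hderiv hbound
  norm_num at this
  rw [inner_gradient_left]
  linarith

end Gradient

theorem successful_iteration_cubic_model_step_general
    (n : ℕ) (f : EuclideanSpace ℝ (Fin n) → ℝ) (L₂ : ℝ)
    (hf : ContDiff ℝ 2 f)
    (hLip : ∀ y z : EuclideanSpace ℝ (Fin n),
      ‖fderiv ℝ (gradient f) y - fderiv ℝ (gradient f) z‖ ≤ L₂ * ‖y - z‖)
    (x : EuclideanSpace ℝ (Fin n))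
    (T m : EuclideanSpace ℝ (Fin n) → ℝ)
    (hT : ∀ s : EuclideanSpace ℝ (Fin n),
      T s = f x + ⟪gradient f x, s⟫ + (1 / 2) * ⟪s, fderiv ℝ (gradient f) x s⟫)
    (σ : ℝ)
    (hm : ∀ s : EuclideanSpace ℝ (Fin n), m s = T s + (σ / 3) * ‖s‖ ^ 3)
    (η₁ : ℝ) (hη₁ : η₁ ∈ Set.Ioo (0 : ℝ) 1)
    (s : EuclideanSpace ℝ (Fin n))
    (hdec : m s < m 0)
    (hσbig : σ ≥ L₂ / (2 * (1 - η₁))) :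
    f x - f (x + s) ≥ η₁ * (T 0 - T s) := by
  have hgrad : Differentiable ℝ (gradient f) :=
    (hf.gradient (n := 1)).differentiable one_ne_zero
  have htaylor : f (x + s) - T s ≤ L₂ / 6 * ‖s‖ ^ 3 := by
    rw [hT s]
    linarith [(abs_le.mp <|
      abs_sub_taylor_le_of_lipschitz_hessian (hf.differentiable two_ne_zero) hgrad hLip x s).2]
  have hT0 : T 0 = f x := by simp [hT]
  have hmodel : σ / 3 * ‖s‖ ^ 3 < f x - T s := by
    rw [hm s, hm 0, hT0, norm_zero] at hdec
    linarith
  have hη₁' : 0 < 1 - η₁ := sub_pos.mpr hη₁.2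
  have hσL : L₂ ≤ 2 * (1 - η₁) * σ := by
    rwa [ge_iff_le, div_le_iff₀' (by positivity)] at hσbig
  have hslack : f (x + s) - T s ≤ (1 - η₁) * (f x - T s) :=
    calc f (x + s) - T s ≤ L₂ / 6 * ‖s‖ ^ 3 := htaylor
      _ ≤ (1 - η₁) * (σ / 3 * ‖s‖ ^ 3) := by nlinarith [pow_nonneg (norm_nonneg s) 3]
      _ ≤ (1 - η₁) * (f x - T s) := by gcongr
  rw [hT0]
  linarith

/-- If the step `s` decreases the cubic model, `m(s) < m(0)`, and
`σ ≥ L₂/(2(1-η₁))`, then the iteration is successful: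
`f(x) - f(x+s) ≥ η₁(T(0) - T(s))`. -/
theorem successful_iteration_cubic_model_step
    (n : ℕ) (f : EuclideanSpace ℝ (Fin n) → ℝ) (L₂ : ℝ) (hL₂ : 0 < L₂)
    (hf : ContDiff ℝ 2 f)
    (hLip : ∀ y z : EuclideanSpace ℝ (Fin n),
      ‖fderiv ℝ (gradient f) y - fderiv ℝ (gradient f) z‖ ≤ L₂ * ‖y - z‖)
    (x : EuclideanSpace ℝ (Fin n))
    (T m : EuclideanSpace ℝ (Fin n) → ℝ)
    (hT : ∀ s : EuclideanSpace ℝ (Fin n),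
      T s = f x + ⟪gradient f x, s⟫ + (1 / 2) * ⟪s, fderiv ℝ (gradient f) x s⟫)
    (σ : ℝ) (hσ : 0 < σ)
    (hm : ∀ s : EuclideanSpace ℝ (Fin n), m s = T s + (σ / 3) * ‖s‖ ^ 3)
    (η₁ : ℝ) (hη₁ : η₁ ∈ Set.Ioo (0 : ℝ) 1)
    (s : EuclideanSpace ℝ (Fin n))
    (hdec : m s < m 0)
    (hσbig : σ ≥ L₂ / (2 * (1 - η₁))) :
    f x - f (x + s) ≥ η₁ * (T 0 - T s) :=
  successful_iteration_cubic_model_step_general n f L₂ hf hLip x T m hT σ hm η₁ hη₁ s hdec hσbig
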